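/- arXiv:2505.00328 — 3 statements merged into one kernel-verified Lean document; each statement's English description precedes it below -/
import Mathlib

section
/- Let (Σ_A, T) be a subshift of finite type and μ a Borel probability measure on Σ_A such that there is C > 1 and P > 0 with C⁻¹ exp(-nP) ≤ μ([x|_n]) ≤ C exp(-nP) for all x ∈ Σ_A and n ≥ 1. Equip Σ_A with a metric d such that B(x, exp(ψ_{n-1}(x))) ⊇ [x|_{n-1}] and B(x, r) ⊆ [x|_{n-1}] whenever exp(ψ_n(x)) < r ≤ exp(ψ_{n-1}(x)), where ψ_n(x) ≤ -c n for some c > 0 and |ψ_n(x) - ψ_n(y)| ≤ C' when x|_n = y|_n. Then for every x ∈ Σ_A, the lower local dimension of μ at x equals -P / liminf_{n→∞} ψ_n(x)/n and the upper local dimension equals -P / limsup_{n→∞} ψ_n(x)/n. -/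
/-!
Write `t = -log r` and `φ t = -log μ (B(x, e^{-t}))`. When `t` lies between two consecutive
levels, `-ψ_N(x) ≤ t < -ψ_{N+1}(x)`, the ball is squeezed between the cylinders `[x|_{N+1}]`
and `[x|_N]`, so `φ t = N P + O(log C)`; the local dimensions are the lower and upper limits of
`φ t / t`. Evaluating at the levels `t = -ψ_n(x)` themselves gives one inequality for each of them,
and the squeeze for general `t` the other.
-/

open Filter MeasureTheory Real Set Topology Metric

theorem eventually_mul_add_le {p q : ℝ} (hpq : p < q) (b : ℝ) :
    ∀ᶠ n : ℕ in atTop, p * n + b ≤ q * n := by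
  filter_upwards
    [(tendsto_natCast_atTop_atTop.const_mul_atTop (sub_pos.2 hpq)).eventually_ge_atTop b] with n hn
  linarith

theorem map_exp_neg_atTop : map (fun t => exp (-t)) atTop = 𝓝[>] 0 := by
  rw [← map_exp_atBot, ← map_neg_atTop, map_map]
  rfl

theorem nonpos_of_forall_le_neg_div {P L : ℝ} (h : ∀ g < 0, L ≤ -P / g) : L ≤ 0 :=
  ge_of_tendsto (f := fun g : ℝ => -P / g) (tendsto_const_nhds.div_atBot tendsto_id)
    ((eventually_lt_atBot 0).mono h)

/- When `v` tends to `-∞` (resp. is not bounded below), `limsup v` (resp. `liminf v`) is the junk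
value `0`, and `-P / 0 = 0` is indeed the limit of `-P / g` as `g → -∞`. -/

theorem eq_neg_div_limsup {v : ℕ → ℝ} {c P L : ℝ} (hc : 0 < c) (hv : ∀ᶠ n in atTop, v n ≤ -c)
    (hL : 0 ≤ L) (hle : ∀ g < 0, (∃ᶠ n in atTop, g ≤ v n) → -P / g ≤ L)
    (hge : ∀ g < 0, (∀ᶠ n in atTop, v n ≤ g) → L ≤ -P / g) : L = -P / limsup v atTop := by
  by_cases hb : IsCoboundedUnder (· ≤ ·) atTop v
  · set β := limsup v atTop
    have hβ : β < 0 := (limsup_le_of_le hb hv).trans_lt (neg_lt_zero.2 hc)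
    have hcont : Tendsto (fun g => -P / g) (𝓝 β) (𝓝 (-P / β)) :=
      tendsto_const_nhds.div tendsto_id hβ.ne
    apply le_antisymm
    · refine ge_of_tendsto (hcont.mono_left (nhdsWithin_le_nhds (s := Ioi β))) ?_
      filter_upwards [Ioo_mem_nhdsGT hβ] with g hg
      exact hge g hg.2 <|
        (eventually_lt_of_limsup_lt hg.1 (isBoundedUnder_of_eventually_le hv)).mono
          fun _ => le_of_lt
    · refine le_of_tendsto (hcont.mono_left (nhdsWithin_le_nhds (s := Iio β))) ?_
      filter_upwards [self_mem_nhdsWithin] with g (hg : g < β)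
      exact hle g (hg.trans hβ) ((frequently_lt_of_lt_limsup hb hg).mono fun _ => le_of_lt)
  · rw [Real.limsup_of_not_isCoboundedUnder hb, div_zero]
    refine le_antisymm (nonpos_of_forall_le_neg_div fun g hg => hge g hg ?_) hL
    by_contra h
    exact hb (.of_frequently_ge ((not_eventually.1 h).mono fun _ => le_of_lt ∘ not_le.1))

theorem eq_neg_div_liminf {v : ℕ → ℝ} {c P L : ℝ} (hc : 0 < c) (hv : ∀ᶠ n in atTop, v n ≤ -c)
    (hL : 0 ≤ L) (hle : ∀ g < 0, (∃ᶠ n in atTop, v n ≤ g) → L ≤ -P / g)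
    (hge : ∀ g < 0, (∀ᶠ n in atTop, g ≤ v n) → -P / g ≤ L) : L = -P / liminf v atTop := by
  by_cases hb : IsBoundedUnder (· ≥ ·) atTop v
  · set α := liminf v atTop
    have hα : α < 0 := (liminf_le_of_frequently_le hv.frequently hb).trans_lt (neg_lt_zero.2 hc)
    have hcont : Tendsto (fun g => -P / g) (𝓝 α) (𝓝 (-P / α)) :=
      tendsto_const_nhds.div tendsto_id hα.ne
    apply le_antisymm
    · refine ge_of_tendsto (hcont.mono_left (nhdsWithin_le_nhds (s := Ioi α))) ?_
      filter_upwards [Ioo_mem_nhdsGT hα] with g hg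
      exact hle g hg.2 <| (frequently_lt_of_liminf_lt
        (isCoboundedUnder_ge_of_eventually_le atTop hv) hg.1).mono fun _ => le_of_lt
    · refine le_of_tendsto (hcont.mono_left (nhdsWithin_le_nhds (s := Iio α))) ?_
      filter_upwards [self_mem_nhdsWithin] with g (hg : g < α)
      exact hge g (hg.trans hα) ((eventually_lt_of_lt_liminf hg hb).mono fun _ => le_of_lt)
  · rw [Real.liminf_of_not_isBoundedUnder hb, div_zero]
    refine le_antisymm (nonpos_of_forall_le_neg_div fun g hg => hle g hg ?_) hL
    by_contra h
    exact hb <| isBoundedUnder_of_eventually_ge <|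
      (not_frequently.1 h).mono fun _ => le_of_lt ∘ not_le.1

section Levels

variable {s : ℕ → ℝ} {c : ℝ}

theorem tendsto_neg_atTop_of_le_neg_mul (hc : 0 < c) (hs : ∀ n, 1 ≤ n → s n ≤ -c * n) :
    Tendsto (fun n => -s n) atTop atTop := by
  refine tendsto_atTop_mono' _ ?_ (tendsto_natCast_atTop_atTop.const_mul_atTop hc)
  filter_upwards [eventually_ge_atTop 1] with n hn
  linarith [hs n hn]

theorem neg_pos_of_le_neg_mul (hc : 0 < c) (hs : ∀ n, 1 ≤ n → s n ≤ -c * n) {n : ℕ}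
    (hn : 1 ≤ n) : 0 < -s n := by
  have : (0 : ℝ) < c * n := mul_pos hc (by exact_mod_cast hn)
  linarith [hs n hn]

theorem eventually_div_le_neg (hs : ∀ n, 1 ≤ n → s n ≤ -c * n) :
    ∀ᶠ n : ℕ in atTop, s n / n ≤ -c := by
  filter_upwards [eventually_ge_atTop 1] with n hn
  rw [div_le_iff₀ (by exact_mod_cast hn)]
  linarith [hs n hn]

theorem exists_le_lt_succ (hc : 0 < c) (hs : ∀ n, 1 ≤ n → s n ≤ -c * n) {k : ℕ} {t : ℝ}
    (hk : 1 ≤ k) (hkt : -s k ≤ t) : ∃ N, k ≤ N ∧ -s N ≤ t ∧ t < -s (N + 1) := by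
  classical
  have hbound : ∀ m, 1 ≤ m → -s m ≤ t → m ≤ ⌈t / c⌉₊ := fun m hm hmt => by
    have : (m : ℝ) ≤ t / c := by rw [le_div_iff₀ hc]; linarith [hs m hm]
    exact_mod_cast this.trans (Nat.le_ceil _)
  refine ⟨Nat.findGreatest (fun m => -s m ≤ t) ⌈t / c⌉₊, Nat.le_findGreatest (hbound k hk hkt) hkt,
    Nat.findGreatest_spec (P := fun m => -s m ≤ t) (hbound k hk hkt) hkt, ?_⟩
  by_contra! h
  exact Nat.findGreatest_is_greatest (lt_add_one _) (hbound _ (Nat.le_add_left 1 _) h) h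

end Levels

structure LevelBounds (s : ℕ → ℝ) (φ : ℝ → ℝ) (c P K : ℝ) : Prop where
  c_pos : 0 < c
  P_pos : 0 < P
  le_neg_mul : ∀ n, 1 ≤ n → s n ≤ -c * n
  lower : ∀ n t, 1 ≤ n → -s n ≤ t → n * P - K ≤ φ t
  upper : ∀ n t, 1 ≤ n → t ≤ -s n → φ t ≤ n * P + K

namespace LevelBounds

variable {s : ℕ → ℝ} {φ : ℝ → ℝ} {c P K : ℝ}

theorem neg_level_pos (h : LevelBounds s φ c P K) {n : ℕ} (hn : 1 ≤ n) : 0 < -s n :=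
  neg_pos_of_le_neg_mul h.c_pos h.le_neg_mul hn

theorem tendsto_neg_level (h : LevelBounds s φ c P K) : Tendsto (fun n => -s n) atTop atTop :=
  tendsto_neg_atTop_of_le_neg_mul h.c_pos h.le_neg_mul

theorem eventually_div_nonneg (h : LevelBounds s φ c P K) : ∀ᶠ t in atTop, 0 ≤ φ t / t := by
  obtain ⟨k, hkK, hk⟩ := ((eventually_mul_add_le h.P_pos K).and (eventually_ge_atTop 1)).exists
  filter_upwards [eventually_ge_atTop (-s k), eventually_ge_atTop 0] with t hkt ht
  have := h.lower k t hk hkt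
  exact div_nonneg (by linarith) ht

theorem eventually_div_le (h : LevelBounds s φ c P K) {g z : ℝ} (hg : g < 0)
    (hv : ∀ᶠ n : ℕ in atTop, s n / n ≤ g) (hz : -P / g < z) : ∀ᶠ t in atTop, φ t / t ≤ z := by
  have hPz : P < -g * z := by rw [div_lt_iff_of_neg hg] at hz; linarith
  have hz0 : 0 < z := by nlinarith [h.P_pos]
  obtain ⟨k, hk⟩ := eventually_atTop.1
    ((hv.and (eventually_mul_add_le hPz (P + K))).and (eventually_ge_atTop 1))
  filter_upwards [eventually_ge_atTop (-s k)] with t hkt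
  obtain ⟨N, hkN, hNt, htN⟩ := exists_le_lt_succ h.c_pos h.le_neg_mul (hk k le_rfl).2 hkt
  obtain ⟨⟨hvN, hlin⟩, hN⟩ := hk N hkN
  have hsN : s N ≤ g * N := (div_le_iff₀ (by exact_mod_cast hN)).1 hvN
  have hφ := h.upper (N + 1) t (Nat.le_add_left 1 N) htN.le
  push_cast at hφ
  rw [div_le_iff₀ ((h.neg_level_pos hN).trans_le hNt)]
  nlinarith

theorem eventually_le_div (h : LevelBounds s φ c P K) {g z : ℝ} (hg : g < 0)
    (hv : ∀ᶠ n : ℕ in atTop, g ≤ s n / n) (hz0 : 0 < z) (hz : z < -P / g) :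
    ∀ᶠ t in atTop, z ≤ φ t / t := by
  have hPz : -g * z < P := by rw [lt_div_iff_of_neg hg] at hz; linarith
  obtain ⟨k, hk⟩ := eventually_atTop.1
    ((hv.and (eventually_mul_add_le hPz (-g * z + K))).and (eventually_ge_atTop 1))
  filter_upwards [eventually_ge_atTop (-s k)] with t hkt
  obtain ⟨N, hkN, hNt, htN⟩ := exists_le_lt_succ h.c_pos h.le_neg_mul (hk k le_rfl).2 hkt
  obtain ⟨⟨-, hlin⟩, hN⟩ := hk N hkN
  have hvN : g * (N + 1 : ℕ) ≤ s (N + 1) :=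
    (le_div_iff₀ (by positivity)).1 (hk (N + 1) (by omega)).1.1
  have hφ := h.lower N t hN hNt
  push_cast at hvN
  rw [le_div_iff₀ ((h.neg_level_pos hN).trans_le hNt)]
  nlinarith

theorem isBoundedUnder_le_div (h : LevelBounds s φ c P K) :
    IsBoundedUnder (· ≤ ·) atTop fun t => φ t / t :=
  isBoundedUnder_of_eventually_le <| h.eventually_div_le (neg_lt_zero.2 h.c_pos)
    (eventually_div_le_neg h.le_neg_mul) (lt_add_one _)

theorem isBoundedUnder_ge_div (h : LevelBounds s φ c P K) :
    IsBoundedUnder (· ≥ ·) atTop fun t => φ t / t :=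
  isBoundedUnder_of_eventually_ge h.eventually_div_nonneg

theorem liminf_div_nonneg (h : LevelBounds s φ c P K) : 0 ≤ liminf (fun t => φ t / t) atTop :=
  le_liminf_of_le h.isBoundedUnder_le_div.isCoboundedUnder_flip h.eventually_div_nonneg

theorem limsup_div_nonneg (h : LevelBounds s φ c P K) : 0 ≤ limsup (fun t => φ t / t) atTop :=
  h.liminf_div_nonneg.trans (liminf_le_limsup h.isBoundedUnder_le_div h.isBoundedUnder_ge_div)

theorem limsup_div_le (h : LevelBounds s φ c P K) {g : ℝ} (hg : g < 0)
    (hv : ∀ᶠ n : ℕ in atTop, s n / n ≤ g) : limsup (fun t => φ t / t) atTop ≤ -P / g :=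
  le_of_forall_gt_imp_ge_of_dense fun _ hz =>
    limsup_le_of_le h.isBoundedUnder_ge_div.isCoboundedUnder_flip (h.eventually_div_le hg hv hz)

theorem le_liminf_div (h : LevelBounds s φ c P K) {g : ℝ} (hg : g < 0)
    (hv : ∀ᶠ n : ℕ in atTop, g ≤ s n / n) : -P / g ≤ liminf (fun t => φ t / t) atTop := by
  refine le_of_forall_lt_imp_le_of_dense fun z hz => ?_
  rcases le_or_gt z 0 with hz0 | hz0
  · exact hz0.trans h.liminf_div_nonneg
  · exact le_liminf_of_le h.isBoundedUnder_le_div.isCoboundedUnder_flip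
      (h.eventually_le_div hg hv hz0 hz)

theorem le_limsup_div (h : LevelBounds s φ c P K) {g : ℝ} (hg : g < 0)
    (hv : ∃ᶠ n : ℕ in atTop, g ≤ s n / n) : -P / g ≤ limsup (fun t => φ t / t) atTop := by
  refine le_of_forall_lt_imp_le_of_dense fun z hz => ?_
  rcases le_or_gt z 0 with hz0 | hz0
  · exact hz0.trans h.limsup_div_nonneg
  have hPz : -g * z < P := by rw [lt_div_iff_of_neg hg] at hz; linarith
  refine le_limsup_of_frequently_le (h.tendsto_neg_level.frequently ?_) h.isBoundedUnder_le_div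
  refine (hv.and_eventually ((eventually_mul_add_le hPz K).and (eventually_ge_atTop 1))).mono ?_
  rintro n ⟨hvn, hlin, hn⟩
  rw [le_div_iff₀ (by exact_mod_cast hn)] at hvn
  have hφ := h.lower n (-s n) hn le_rfl
  rw [le_div_iff₀ (h.neg_level_pos hn)]
  nlinarith

theorem liminf_div_le (h : LevelBounds s φ c P K) {g : ℝ} (hg : g < 0)
    (hv : ∃ᶠ n : ℕ in atTop, s n / n ≤ g) : liminf (fun t => φ t / t) atTop ≤ -P / g := by
  refine le_of_forall_gt_imp_ge_of_dense fun z hz => ?_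
  have hPz : P < -g * z := by rw [div_lt_iff_of_neg hg] at hz; linarith
  have hz0 : 0 < z := by nlinarith [h.P_pos]
  refine liminf_le_of_frequently_le (h.tendsto_neg_level.frequently ?_) h.isBoundedUnder_ge_div
  refine (hv.and_eventually ((eventually_mul_add_le hPz K).and (eventually_ge_atTop 1))).mono ?_
  rintro n ⟨hvn, hlin, hn⟩
  rw [div_le_iff₀ (by exact_mod_cast hn)] at hvn
  have hφ := h.upper n (-s n) hn le_rfl
  rw [div_le_iff₀ (h.neg_level_pos hn)]
  nlinarith

end LevelBounds

section Ball

variable {X : Type*} [MetricSpace X] [MeasurableSpace X] {μ : Measure X} [IsFiniteMeasure μ]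
  {cyl : X → ℕ → Set X} {ψ : ℕ → X → ℝ} {x : X} {c C P : ℝ}

theorem le_measure_ball (hin : ∀ n, cyl x n ⊆ ball x (exp (ψ n x)))
    (hμl : ∀ n : ℕ, 1 ≤ n → C⁻¹ * exp (-(n : ℝ) * P) ≤ (μ (cyl x n)).toReal)
    {n : ℕ} {r : ℝ} (hn : 1 ≤ n) (hr : exp (ψ n x) ≤ r) :
    C⁻¹ * exp (-(n : ℝ) * P) ≤ (μ (ball x r)).toReal :=
  (hμl n hn).trans <| ENNReal.toReal_mono (measure_ne_top μ _) <|
    measure_mono ((hin n).trans (ball_subset_ball hr))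

theorem measure_ball_pos (hc : 0 < c) (hneg : ∀ n, 1 ≤ n → ψ n x ≤ -c * n) (hC : 0 < C)
    (hin : ∀ n, cyl x n ⊆ ball x (exp (ψ n x)))
    (hμl : ∀ n : ℕ, 1 ≤ n → C⁻¹ * exp (-(n : ℝ) * P) ≤ (μ (cyl x n)).toReal)
    {r : ℝ} (hr : 0 < r) : 0 < (μ (ball x r)).toReal := by
  obtain ⟨n, hnr, hn⟩ := (((tendsto_neg_atTop_of_le_neg_mul hc hneg).eventually_ge_atTop
    (-log r)).and (eventually_ge_atTop 1)).exists
  have hψr : exp (ψ n x) ≤ r := (le_log_iff_exp_le hr).1 (by linarith)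
  exact (by positivity : 0 < C⁻¹ * exp (-(n : ℝ) * P)).trans_le (le_measure_ball hin hμl hn hψr)

theorem measure_ball_le (hc : 0 < c) (hneg : ∀ n, 1 ≤ n → ψ n x ≤ -c * n) (hC : 0 ≤ C)
    (hP : 0 ≤ P) (hμu : ∀ n : ℕ, 1 ≤ n → (μ (cyl x n)).toReal ≤ C * exp (-(n : ℝ) * P))
    (hout : ∀ n r, 1 ≤ n → exp (ψ n x) < r → r ≤ exp (ψ (n - 1) x) → ball x r ⊆ cyl x (n - 1))
    {n : ℕ} {r : ℝ} (hn : 1 ≤ n) (hr0 : 0 < r) (hr : r ≤ exp (ψ n x)) :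
    (μ (ball x r)).toReal ≤ C * exp (-(n : ℝ) * P) := by
  obtain ⟨N, hnN, hNr, hrN⟩ := exists_le_lt_succ (s := fun n => ψ n x) (t := -log r) hc hneg hn
    (neg_le_neg ((log_le_iff_le_exp hr0).2 hr))
  have hball : ball x r ⊆ cyl x N := by
    have h := hout (N + 1) r (Nat.le_add_left 1 N)
    rw [Nat.add_sub_cancel] at h
    exact h ((lt_log_iff_exp_lt hr0).1 (by linarith)) ((log_le_iff_le_exp hr0).1 (by linarith))
  calc (μ (ball x r)).toReal ≤ (μ (cyl x N)).toReal :=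
        ENNReal.toReal_mono (measure_ne_top μ _) (measure_mono hball)
    _ ≤ C * exp (-(N : ℝ) * P) := hμu N (hn.trans hnN)
    _ ≤ C * exp (-(n : ℝ) * P) := by gcongr

theorem levelBounds_neg_log_measure_ball (hc : 0 < c) (hneg : ∀ n, 1 ≤ n → ψ n x ≤ -c * n)
    (hC : 0 < C) (hP : 0 < P) (hin : ∀ n, cyl x n ⊆ ball x (exp (ψ n x)))
    (hμl : ∀ n : ℕ, 1 ≤ n → C⁻¹ * exp (-(n : ℝ) * P) ≤ (μ (cyl x n)).toReal)
    (hμu : ∀ n : ℕ, 1 ≤ n → (μ (cyl x n)).toReal ≤ C * exp (-(n : ℝ) * P))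
    (hout : ∀ n r, 1 ≤ n → exp (ψ n x) < r → r ≤ exp (ψ (n - 1) x) → ball x r ⊆ cyl x (n - 1)) :
    LevelBounds (fun n => ψ n x) (fun t => -log (μ (ball x (exp (-t)))).toReal) c P (log C) where
  c_pos := hc
  P_pos := hP
  le_neg_mul := hneg
  lower n t hn ht := by
    have hμ := measure_ball_le hc hneg hC.le hP.le hμu hout hn (exp_pos _)
      (exp_le_exp.2 (by linarith : -t ≤ ψ n x))
    calc n * P - log C = -log (C * exp (-(n : ℝ) * P)) := by
          rw [log_mul hC.ne' (exp_pos _).ne', log_exp]; ring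
      _ ≤ -log (μ (ball x (exp (-t)))).toReal :=
          neg_le_neg (log_le_log (measure_ball_pos hc hneg hC hin hμl (exp_pos _)) hμ)
  upper n t hn ht := by
    have hμ := le_measure_ball hin hμl hn (exp_le_exp.2 (by linarith : ψ n x ≤ -t))
    calc -log (μ (ball x (exp (-t)))).toReal ≤ -log (C⁻¹ * exp (-(n : ℝ) * P)) :=
          neg_le_neg (log_le_log (by positivity) hμ)
      _ = n * P + log C := by
          rw [log_mul (inv_pos.2 hC).ne' (exp_pos _).ne', log_inv, log_exp]; ring

end Ball

theorem local_dimension_of_gibbs_general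
    {X : Type*} [MetricSpace X] [MeasurableSpace X]
    (μ : Measure X) [IsProbabilityMeasure μ]
    (cyl : X → ℕ → Set X) (ψ : ℕ → X → ℝ)
    (c : ℝ) (hc : 0 < c) (hneg : ∀ (n : ℕ) (x : X), 1 ≤ n → ψ n x ≤ -c * n)
    (C P : ℝ) (hC : 1 < C) (hP : 0 < P)
    (hμl : ∀ (x : X) (n : ℕ), 1 ≤ n →
      C⁻¹ * Real.exp (-(n : ℝ) * P) ≤ (μ (cyl x n)).toReal)
    (hμu : ∀ (x : X) (n : ℕ), 1 ≤ n →
      (μ (cyl x n)).toReal ≤ C * Real.exp (-(n : ℝ) * P))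
    (hin : ∀ (x : X) (n : ℕ), cyl x n ⊆ Metric.ball x (Real.exp (ψ n x)))
    (hout : ∀ (x : X) (n : ℕ) (r : ℝ), 1 ≤ n →
      Real.exp (ψ n x) < r → r ≤ Real.exp (ψ (n - 1) x) →
      Metric.ball x r ⊆ cyl x (n - 1)) :
    ∀ x : X,
      liminf (fun r : ℝ => Real.log ((μ (Metric.ball x r)).toReal) / Real.log r)
          (nhdsWithin 0 (Set.Ioi 0))
        = -P / liminf (fun n : ℕ => ψ n x / n) atTop
      ∧ limsup (fun r : ℝ => Real.log ((μ (Metric.ball x r)).toReal) / Real.log r)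
          (nhdsWithin 0 (Set.Ioi 0))
        = -P / limsup (fun n : ℕ => ψ n x / n) atTop := by
  intro x
  have hs : ∀ n, 1 ≤ n → ψ n x ≤ -c * n := fun n => hneg n x
  have hφ := levelBounds_neg_log_measure_ball hc hs (one_pos.trans hC) hP (hin x) (hμl x)
    (hμu x) (hout x)
  have hF : (fun r => log (μ (ball x r)).toReal / log r) ∘ (fun t => exp (-t)) =
      fun t => -log (μ (ball x (exp (-t)))).toReal / t := by
    ext t
    simp only [Function.comp, log_exp, div_neg, neg_div]
  rw [← map_exp_neg_atTop, ← liminf_comp, ← limsup_comp, hF]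
  exact ⟨eq_neg_div_liminf hc (eventually_div_le_neg hs) hφ.liminf_div_nonneg
      (fun _ => hφ.liminf_div_le) (fun _ => hφ.le_liminf_div),
    eq_neg_div_limsup hc (eventually_div_le_neg hs) hφ.limsup_div_nonneg
      (fun _ => hφ.le_limsup_div) (fun _ => hφ.limsup_div_le)⟩

/-- Local dimensions of a Gibbs-type measure on a symbolic space with a weak-Gibbs
metric.  `cyl x n` models the cylinder `[x|_n]`; the measure of cylinders decays
like `exp (-n P)`; cylinders are comparable to metric balls with radii
`exp (ψ_n x)` for a negative, bounded-variation potential `ψ`.  Then the lower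
(resp. upper) local dimension of `μ` at every `x` equals
`-P / liminf_n ψ_n(x)/n` (resp. `-P / limsup_n ψ_n(x)/n`). -/
theorem local_dimension_of_gibbs
    {X : Type*} [MetricSpace X] [MeasurableSpace X] [BorelSpace X]
    (μ : Measure X) [IsProbabilityMeasure μ]
    (cyl : X → ℕ → Set X) (ψ : ℕ → X → ℝ)
    (c : ℝ) (hc : 0 < c) (hneg : ∀ (n : ℕ) (x : X), 1 ≤ n → ψ n x ≤ -c * n)
    (C' : ℝ) (hbv : ∀ (n : ℕ) (x y : X), y ∈ cyl x n → |ψ n x - ψ n y| ≤ C')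
    (C P : ℝ) (hC : 1 < C) (hP : 0 < P)
    (hμl : ∀ (x : X) (n : ℕ), 1 ≤ n →
      C⁻¹ * Real.exp (-(n : ℝ) * P) ≤ (μ (cyl x n)).toReal)
    (hμu : ∀ (x : X) (n : ℕ), 1 ≤ n →
      (μ (cyl x n)).toReal ≤ C * Real.exp (-(n : ℝ) * P))
    (hin : ∀ (x : X) (n : ℕ), cyl x n ⊆ Metric.ball x (Real.exp (ψ n x)))
    (hout : ∀ (x : X) (n : ℕ) (r : ℝ), 1 ≤ n →
      Real.exp (ψ n x) < r → r ≤ Real.exp (ψ (n - 1) x) →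
      Metric.ball x r ⊆ cyl x (n - 1)) :
    ∀ x : X,
      liminf (fun r : ℝ => Real.log ((μ (Metric.ball x r)).toReal) / Real.log r)
          (nhdsWithin 0 (Set.Ioi 0))
        = -P / liminf (fun n : ℕ => ψ n x / n) atTop
      ∧ limsup (fun r : ℝ => Real.log ((μ (Metric.ball x r)).toReal) / Real.log r)
          (nhdsWithin 0 (Set.Ioi 0))
        = -P / limsup (fun n : ℕ => ψ n x / n) atTop :=
  local_dimension_of_gibbs_general μ cyl ψ c hc hneg C P hC hP hμl hμu hin hout
end

section
/- Let (X,T) be a topological dynamical system and Ψ = {ψ_n} a negative almost additive potential with bounded variation on a subshift of finite type. Suppose that for every y ∈ X, liminf_{n→∞} (1/n)(ψ_n(y) - inf_{x∈X} ψ_n(x)) ≥ ε₀ for some ε₀ > 0. Then this leads to a contradiction; hence inf_{y∈X} liminf_{n→∞} (1/n) ψ_n(y) = lim_{n→∞} (1/n) inf_{x∈X} ψ_n(x). -/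
/-!
Fekete's lemma applied to the almost superadditive sequence `a n = inf ψ_n` gives the limit `L`
of `a n / n`, and `a n ≤ ψ_n y` gives `L ≤ liminf ψ_n(y)/n` for every `y`. Conversely, if
`β < liminf ψ_n(y)/n` for every `y`, compactness yields `N` such that every orbit enters, within
at most `N` steps, a block of length `n ≥ m₀` along which `ψ_n > β n`. Cutting an orbit into such
blocks costs the defect `C` at each cut, so `inf ψ_K ≥ (β - C/m₀) K - O(1)`, whence `L ≥ β`.
-/

open Filter Set Topology

def IsAlmostAdditive {X : Type*} (T : X → X) (ψ : ℕ → X → ℝ) (C : ℝ) : Prop :=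
  ∀ (x : X) (n m : ℕ), 1 ≤ n → 1 ≤ m → |ψ (n + m) x - ψ n x - ψ m (T^[n] x)| ≤ C

theorem exists_tendsto_div_of_add_sub_le {a : ℕ → ℝ} {C M : ℝ}
    (hsup : ∀ m n, 1 ≤ m → 1 ≤ n → a m + a n - C ≤ a (m + n))
    (hbdd : ∀ n, 1 ≤ n → a n ≤ M * n) :
    ∃ L, Tendsto (fun n : ℕ => a n / n) atTop (𝓝 L) := by
  -- `Subadditive` also constrains the index `0`, about which `hsup` says nothing
  set u : ℕ → ℝ := fun n => if n = 0 then 0 else C - a n with hu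
  have hsub : Subadditive u := by
    intro m n
    rcases Nat.eq_zero_or_pos m with rfl | hm
    · simp [hu]
    rcases Nat.eq_zero_or_pos n with rfl | hn
    · simp [hu]
    simp only [hu, if_neg (Nat.pos_iff_ne_zero.mp (Nat.add_pos_left hm n)), if_neg hm.ne',
      if_neg hn.ne']
    linarith [hsup m n hm hn]
  have hbdd' : BddBelow (range fun n => u n / n) := by
    refine ⟨min 0 (-(|C| + M)), forall_mem_range.2 fun n => ?_⟩
    rcases Nat.eq_zero_or_pos n with rfl | hn
    · simp [hu]
    have hn' : (1 : ℝ) ≤ n := by exact_mod_cast hn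
    simp only [hu, if_neg hn.ne']
    rw [le_div_iff₀ (by positivity)]
    nlinarith [hbdd n hn, neg_abs_le C, abs_nonneg C, min_le_right 0 (-(|C| + M))]
  have hlim := (tendsto_const_div_atTop_nhds_zero_nat C).sub (hsub.tendsto_lim hbdd')
  rw [zero_sub] at hlim
  refine ⟨-hsub.lim, hlim.congr' ?_⟩
  filter_upwards [eventually_ge_atTop 1] with n hn
  simp only [hu, if_neg (Nat.one_le_iff_ne_zero.mp hn)]
  ring

theorem exists_uniform_bound_of_frequently_mem {X : Type*} [TopologicalSpace X]
    [CompactSpace X] {U : ℕ → Set X} (hU : ∀ n, IsOpen (U n))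
    (h : ∀ y, ∃ᶠ n in atTop, y ∈ U n) (m₀ : ℕ) :
    ∃ N, ∀ y, ∃ n, m₀ ≤ n ∧ n ≤ N ∧ y ∈ U n := by
  obtain ⟨t, ht⟩ := isCompact_univ.elim_finite_subcover (fun n => {_y : X | m₀ ≤ n} ∩ U n)
    (fun n => isOpen_const.inter (hU n)) fun y _ => by
      obtain ⟨n, hn, hmn⟩ := ((h y).and_eventually (eventually_ge_atTop m₀)).exists
      exact mem_iUnion.2 ⟨n, hmn, hn⟩
  refine ⟨t.sup id, fun y => ?_⟩
  obtain ⟨n, hnt, hmn, hn⟩ := mem_iUnion₂.1 (ht (mem_univ y))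
  exact ⟨n, hmn, Finset.le_sup (f := id) hnt, hn⟩

namespace IsAlmostAdditive

variable {X : Type*} {T : X → X} {ψ : ℕ → X → ℝ} {C : ℝ}

theorem nonneg [Nonempty X] (h : IsAlmostAdditive T ψ C) : 0 ≤ C :=
  (abs_nonneg _).trans (h (Classical.arbitrary X) 1 1 le_rfl le_rfl)

theorem add_sub_le (h : IsAlmostAdditive T ψ C) (x : X) {n m : ℕ} (hn : 1 ≤ n) (hm : 1 ≤ m) :
    ψ n x + ψ m (T^[n] x) - C ≤ ψ (n + m) x := by
  linarith [(abs_le.1 (h x n m hn hm)).1]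

theorem le_add_add (h : IsAlmostAdditive T ψ C) (x : X) {n m : ℕ} (hn : 1 ≤ n) (hm : 1 ≤ m) :
    ψ (n + m) x ≤ ψ n x + ψ m (T^[n] x) + C := by
  linarith [(abs_le.1 (h x n m hn hm)).2]

theorem le_mul_of_le (h : IsAlmostAdditive T ψ C) {M : ℝ} (hM : ∀ x, ψ 1 x ≤ M) :
    ∀ n, 1 ≤ n → ∀ x, ψ n x ≤ (M + C) * n := by
  intro n hn x
  have : Nonempty X := ⟨x⟩
  induction n, hn using Nat.le_induction generalizing x with
  | base => rw [Nat.cast_one, mul_one]; linarith [hM x, h.nonneg]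
  | succ n hn ih =>
    push_cast
    linarith [h.le_add_add x hn le_rfl, ih x, hM (T^[n] x)]

theorem isBoundedUnder_le_div (h : IsAlmostAdditive T ψ C) {M : ℝ} (hM : ∀ x, ψ 1 x ≤ M)
    (x : X) : IsBoundedUnder (· ≤ ·) atTop fun n : ℕ => ψ n x / n := by
  refine isBoundedUnder_of_eventually_le (a := M + C) ?_
  filter_upwards [eventually_ge_atTop 1] with n hn
  rw [div_le_iff₀ (by exact_mod_cast hn)]
  exact h.le_mul_of_le hM n hn x

theorem sInf_range_add_sub_le [Nonempty X] (h : IsAlmostAdditive T ψ C)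
    (hψ : ∀ n, BddBelow (range (ψ n))) (m n : ℕ) (hm : 1 ≤ m) (hn : 1 ≤ n) :
    sInf (range (ψ m)) + sInf (range (ψ n)) - C ≤ sInf (range (ψ (m + n))) :=
  le_csInf (range_nonempty _) <| forall_mem_range.2 fun x => by
    linarith [h.add_sub_le x hm hn, csInf_le (hψ m) (mem_range_self x),
      csInf_le (hψ n) (mem_range_self (T^[m] x))]

theorem mul_sub_le_of_forall_exists (h : IsAlmostAdditive T ψ C) {γ G : ℝ} {N : ℕ}
    (hstep : ∀ y, ∃ n, 1 ≤ n ∧ n ≤ N ∧ γ * n + C ≤ ψ n y)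
    (hbase : ∀ k, 1 ≤ k → k ≤ N → ∀ y, γ * k - G ≤ ψ k y) :
    ∀ K, 1 ≤ K → ∀ y, γ * K - G ≤ ψ K y := by
  intro K
  induction K using Nat.strong_induction_on with
  | _ K ih =>
    intro hK y
    by_cases hKN : K ≤ N
    · exact hbase K hK hKN y
    obtain ⟨n, hn, hnN, hny⟩ := hstep y
    have hnK : n + (K - n) = K := by omega
    have hrest := ih (K - n) (by omega) (by omega) (T^[n] y)
    have hsplit := h.add_sub_le y hn (show 1 ≤ K - n by omega)
    rw [hnK] at hsplit
    rw [Nat.cast_sub (by omega)] at hrest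
    linarith

variable [TopologicalSpace X] [CompactSpace X]

theorem le_of_frequently_lt [Nonempty X] (h : IsAlmostAdditive T ψ C)
    (hψ : ∀ n, Continuous (ψ n)) {L β : ℝ}
    (hL : Tendsto (fun n : ℕ => sInf (range (ψ n)) / n) atTop (𝓝 L))
    (hβ : ∀ y, ∃ᶠ n : ℕ in atTop, β < ψ n y / n) : β ≤ L := by
  have hC := h.nonneg
  suffices hm : ∀ m₀ : ℕ, 1 ≤ m₀ → β - C / m₀ ≤ L by
    refine le_of_tendsto ?_ ((eventually_ge_atTop 1).mono hm)
    simpa using tendsto_const_nhds.sub (tendsto_const_div_atTop_nhds_zero_nat C)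
  intro m₀ hm₀
  have hm₀' : (0 : ℝ) < m₀ := by exact_mod_cast hm₀
  -- the defect `C`, paid once per block of length at least `m₀`, costs at most `C / m₀` in rate
  set γ := β - C / m₀
  obtain ⟨N, hN⟩ := exists_uniform_bound_of_frequently_mem
    (fun n => isOpen_lt continuous_const ((hψ n).div_const n)) hβ m₀
  have hstep : ∀ y, ∃ n, 1 ≤ n ∧ n ≤ N ∧ γ * n + C ≤ ψ n y := fun y => by
    obtain ⟨n, hmn, hnN, hn⟩ := hN y
    have hmn' : (m₀ : ℝ) ≤ n := by exact_mod_cast hmn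
    replace hn : β * n < ψ n y := (lt_div_iff₀ (by linarith)).1 hn
    refine ⟨n, hm₀.trans hmn, hnN, ?_⟩
    have : C ≤ C / m₀ * n := by
      rw [div_mul_eq_mul_div, le_div_iff₀ hm₀']
      exact mul_le_mul_of_nonneg_left hmn' hC
    linarith
  have hbdd : ∀ n, BddBelow (range (ψ n)) := fun n => (isCompact_range (hψ n)).bddBelow
  obtain ⟨G, hG⟩ := ((finite_Iic N).image fun k => γ * k - sInf (range (ψ k))).bddAbove
  have hK : ∀ K, 1 ≤ K → γ * K - G ≤ sInf (range (ψ K)) := fun K hK =>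
    le_csInf (range_nonempty _) <| forall_mem_range.2 <| h.mul_sub_le_of_forall_exists hstep
      (fun k _ hkN y => by
        linarith [hG (mem_image_of_mem _ (mem_Iic.2 hkN)), csInf_le (hbdd k) (mem_range_self y)])
      K hK
  refine le_of_tendsto_of_tendsto (f := fun K : ℕ => γ - G / K) ?_ hL ?_
  · simpa using tendsto_const_nhds.sub (tendsto_const_div_atTop_nhds_zero_nat G)
  · filter_upwards [eventually_ge_atTop 1] with K hK'
    have hKpos : (0 : ℝ) < K := by exact_mod_cast hK'
    rw [sub_div' hKpos.ne']
    exact div_le_div_of_nonneg_right (hK K hK') hKpos.le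

end IsAlmostAdditive

theorem inf_liminf_eq_lim_inf_general
    {X : Type*} [MetricSpace X] [CompactSpace X] [Nonempty X]
    (T : X → X)
    (ψ : ℕ → X → ℝ) (hψ : ∀ n, Continuous (ψ n))
    (Caa : ℝ)
    (haa : ∀ (x : X) (n m : ℕ), 1 ≤ n → 1 ≤ m →
      |ψ (n + m) x - ψ n x - ψ m (T^[n] x)| ≤ Caa) :
    ∃ L : ℝ,
      Tendsto (fun n : ℕ => sInf (Set.range (ψ n)) / n) atTop (nhds L) ∧
      (⨅ y : X, liminf (fun n : ℕ => ψ n y / n) atTop) = L := by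
  have haa : IsAlmostAdditive T ψ Caa := haa
  have hbdd : ∀ n, BddBelow (range (ψ n)) := fun n => (isCompact_range (hψ n)).bddBelow
  obtain ⟨M, hM⟩ := (isCompact_range (hψ 1)).bddAbove
  have hM : ∀ x, ψ 1 x ≤ M := fun x => hM (mem_range_self x)
  obtain ⟨L, hL⟩ := exists_tendsto_div_of_add_sub_le (haa.sInf_range_add_sub_le hbdd)
    fun n hn => (csInf_le (hbdd n) (mem_range_self _)).trans
      (haa.le_mul_of_le hM n hn (Classical.arbitrary X))
  have hle : ∀ y, ∀ᶠ n : ℕ in atTop, sInf (range (ψ n)) / n ≤ ψ n y / n := fun y =>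
    Eventually.of_forall fun n => div_le_div_of_nonneg_right
      (csInf_le (hbdd n) (mem_range_self y)) n.cast_nonneg
  have hlow : ∀ y, L ≤ liminf (fun n : ℕ => ψ n y / n) atTop := fun y =>
    hL.liminf_eq ▸ liminf_le_liminf (hle y) hL.isBoundedUnder_ge
      (haa.isBoundedUnder_le_div hM y).isCoboundedUnder_ge
  refine ⟨L, hL, le_antisymm ?_ (le_ciInf hlow)⟩
  refine le_of_forall_lt_imp_le_of_dense fun β hβ => haa.le_of_frequently_lt hψ hL fun y => ?_
  refine (eventually_lt_of_lt_liminf (hβ.trans_le (ciInf_le ⟨L, forall_mem_range.2 hlow⟩ y))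
    ?_).frequently
  exact (hL.isBoundedUnder_ge).mono_ge (hle y)

/-- For a negative almost additive potential `Ψ = {ψ_n}` (of continuous functions)
on a compact dynamical system, the pointwise infimum of the liminf of the averages
`ψ_n(y)/n` coincides with the limit of the normalized infima
`inf_x ψ_n(x) / n` (which exists). -/
theorem inf_liminf_eq_lim_inf
    {X : Type*} [MetricSpace X] [CompactSpace X] [Nonempty X]
    (T : X → X) (hT : Continuous T)
    (ψ : ℕ → X → ℝ) (hψ : ∀ n, Continuous (ψ n))
    (Caa : ℝ) (hCaa : 0 ≤ Caa)
    (haa : ∀ (x : X) (n m : ℕ), 1 ≤ n → 1 ≤ m →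
      |ψ (n + m) x - ψ n x - ψ m (T^[n] x)| ≤ Caa)
    (c : ℝ) (hc : 0 < c) (hneg : ∀ (n : ℕ) (x : X), 1 ≤ n → ψ n x ≤ -c * n) :
    ∃ L : ℝ,
      Tendsto (fun n : ℕ => sInf (Set.range (ψ n)) / n) atTop (nhds L) ∧
      (⨅ y : X, liminf (fun n : ℕ => ψ n y / n) atTop) = L :=
  inf_liminf_eq_lim_inf_general T ψ hψ Caa haa
end

section
/- Let a₁, a₂ be positive integers and consider the function values determined by the Sturmian band-counting combinatorics: if max{a₁,a₂} = 1 then F̲(a) = -4/3, and if max{a₁,a₂} > 1 then F̲(a) = -max{a₁,a₂}; if min{a₁,a₂} = 1 then F̄(a) = -1, and if min{a₁,a₂} > 1 then F̄(a) = -2. Here F̲(a) = lim_n (1/n) inf_{v} S_n f(v) and F̄(a) = lim_n (1/n) sup_{v} S_n f(v) over the subshift Ω_a with f(v) = -2 + Σ_{j=1}^{2}(2-a_j)·χ{t(w_j)=2} for v|₁ = w₁w₂. -/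
open Filter

/-- Letters `(t, i)` of the alphabet `𝒜_m`: here `t : Fin 3` encodes the type
(`0 ↦ 𝟏`, `1 ↦ 𝟐`, `2 ↦ 𝟑`) and `i` the index, so
`𝒜_m = {(𝟏,i) : 1 ≤ i ≤ m+1} ∪ {(𝟐,1)} ∪ {(𝟑,i) : 1 ≤ i ≤ m}`. -/
def validLetter (m : ℕ) (e : Fin 3 × ℕ) : Prop :=
  (e.1 = 0 ∧ 1 ≤ e.2 ∧ e.2 ≤ m + 1) ∨ (e.1 = 1 ∧ e.2 = 1) ∨ (e.1 = 2 ∧ 1 ≤ e.2 ∧ e.2 ≤ m)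

/-- Admissible transition from a letter of type `t` to a letter `e ∈ 𝒜_m`:
type `𝟏 → (𝟐,1)`; type `𝟐 → (𝟏,i)` (`i ≤ m+1`) or `(𝟑,i)` (`i ≤ m`);
type `𝟑 → (𝟏,i)` (`i ≤ m`) or `(𝟑,i)` (`i ≤ m-1`). -/
def letterTrans (m : ℕ) (t : Fin 3) (e : Fin 3 × ℕ) : Prop :=
  validLetter m e ∧
    ((t = 0 ∧ e.1 = 1) ∨
     (t = 1 ∧ (e.1 = 0 ∨ e.1 = 2)) ∨
     (t = 2 ∧ ((e.1 = 0 ∧ e.2 ≤ m) ∨ (e.1 = 2 ∧ e.2 + 1 ≤ m))))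

/-- The subshift `Ω_a` for a block `a = (a₁, a₂)`: sequences of admissible pairs
`(w₁, w₂)` with `w₁ ∈ 𝒜_{a₁}`, `w₂ ∈ 𝒜_{a₂}`, within-pair and between-pair
transitions admissible. -/
def OmegaPair (a₁ a₂ : ℕ) : Set (ℕ → (Fin 3 × ℕ) × (Fin 3 × ℕ)) :=
  {v | ∀ n : ℕ, validLetter a₁ (v n).1 ∧ letterTrans a₂ ((v n).1).1 (v n).2 ∧
        letterTrans a₁ ((v n).2).1 (v (n + 1)).1}

/-- The function `f(v) = -2 + Σ_{j=1}^{2} (2 - a_j) χ{t(w_j) = 𝟐}` for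
`v|₁ = w₁w₂`. -/
def fPair (a₁ a₂ : ℕ) (v : ℕ → (Fin 3 × ℕ) × (Fin 3 × ℕ)) : ℝ :=
  -2 + (if ((v 0).1).1 = 1 then (2 : ℝ) - (a₁ : ℝ) else 0)
     + (if ((v 0).2).1 = 1 then (2 : ℝ) - (a₂ : ℝ) else 0)

/-- Birkhoff sum `S_n f` of `fPair` along the shift on `Ω_a`. -/
def birkhoffPair (a₁ a₂ n : ℕ) (v : ℕ → (Fin 3 × ℕ) × (Fin 3 × ℕ)) : ℝ :=
  ∑ i ∈ Finset.range n, fPair a₁ a₂ (fun j => v (j + i))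

/-!
A pair `(w₁, w₂)` never has two letters of type `𝟐` (a `𝟐` is followed by a `𝟏` or a `𝟑`), so
every value of `f` is `-2`, `-a₁` or `-a₂`. The constant orbits of `(𝟐,1)(𝟏,1)`, `(𝟏,1)(𝟐,1)`
and, when `a₁, a₂ ≥ 2`, `(𝟑,1)(𝟑,1)` attain the extreme admissible value, so the extremal
Birkhoff sums are exactly linear in `n`, except for the infimum when `a = (1,1)`. There
`f = -2 + #{type-𝟐 letters of the pair}`, and for `m = 1` a `𝟑` is followed by a `𝟏`, which is
followed by a `𝟐`; so every three consecutive letters contain a `𝟐`, three consecutive pairs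
contribute at least `-4`, and a 3-periodic orbit attains this.
-/

open Finset Topology

lemma le_sum_range_of_block_sum {g : ℕ → ℝ} {k : ℕ} {c B : ℝ} (hk : 0 < k) (hB : 0 ≤ B)
    (hg : ∀ i, c - B ≤ g i) (hblock : ∀ i, k * c ≤ ∑ j ∈ range k, g (i + j)) (n : ℕ) :
    c * n - (k - 1) * B ≤ ∑ i ∈ range n, g i := by
  induction n using Nat.strong_induction_on with
  | _ n ih =>
  rcases lt_or_ge n k with hn | hn
  · have hnk : (n : ℝ) + 1 ≤ k := by exact_mod_cast hn
    calc c * n - (k - 1) * B ≤ n • (c - B) := by rw [nsmul_eq_mul]; nlinarith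
      _ ≤ ∑ i ∈ range n, g i := by simpa using card_nsmul_le_sum (range n) g _ fun i _ => hg i
  · obtain ⟨m, rfl⟩ := Nat.exists_eq_add_of_le' hn
    rw [sum_range_add]
    have := ih m (by omega)
    push_cast
    linarith [hblock m]

lemma tendsto_div_of_abs_sub_mul_le {x : ℕ → ℝ} {c d : ℝ} (h : ∀ n, |x n - c * n| ≤ d) :
    Tendsto (fun n => x n / n) atTop (𝓝 c) := by
  have hzero : Tendsto (fun n : ℕ => (x n - c * n) / n) atTop (𝓝 0) := by
    refine squeeze_zero_norm (fun n => ?_) (tendsto_const_div_atTop_nhds_zero_nat d)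
    rw [norm_div, Real.norm_natCast, Real.norm_eq_abs]
    exact div_le_div_of_nonneg_right (h n) n.cast_nonneg
  rw [← add_zero c]
  refine (hzero.const_add c).congr' ?_
  filter_upwards [eventually_ne_atTop 0] with n hn
  field_simp
  ring

lemma one_le_ite_add_ite_add_ite {p q r : Prop} [Decidable p] [Decidable q] [Decidable r]
    (h : p ∨ q ∨ r) :
    (1 : ℝ) ≤ (if p then 1 else 0) + (if q then 1 else 0) + (if r then 1 else 0) := by
  rcases h with h | h | h <;> simp only [h, if_true] <;> split_ifs <;> norm_num

section Subshift

variable {a₁ a₂ : ℕ} {v : ℕ → (Fin 3 × ℕ) × (Fin 3 × ℕ)}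

lemma fPair_shift (a₁ a₂ : ℕ) (v : ℕ → (Fin 3 × ℕ) × (Fin 3 × ℕ)) (i : ℕ) :
    fPair a₁ a₂ (fun j => v (j + i)) =
      -2 + (if ((v i).1).1 = 1 then 2 - (a₁ : ℝ) else 0)
        + (if ((v i).2).1 = 1 then 2 - (a₂ : ℝ) else 0) := by
  simp [fPair]

lemma OmegaPair.not_both_type_two (hv : v ∈ OmegaPair a₁ a₂) (n : ℕ) :
    ¬(((v n).1).1 = 1 ∧ ((v n).2).1 = 1) := by
  rintro ⟨h₁, h₂⟩
  obtain ⟨-, ⟨-, htrans⟩, -⟩ := hv n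
  simp [h₁, h₂] at htrans

lemma fPair_shift_eq_or (hv : v ∈ OmegaPair a₁ a₂) (i : ℕ) :
    fPair a₁ a₂ (fun j => v (j + i)) = -2 ∨ fPair a₁ a₂ (fun j => v (j + i)) = -a₁ ∨
      fPair a₁ a₂ (fun j => v (j + i)) = -a₂ := by
  have := OmegaPair.not_both_type_two hv i
  rw [fPair_shift]
  split_ifs with h₁ h₂ h₂
  · exact absurd ⟨h₁, h₂⟩ this
  · exact .inr <| .inl (by ring)
  · exact .inr <| .inr (by ring)
  · exact .inl (by ring)

lemma birkhoffPair_const (a₁ a₂ n : ℕ) (p : (Fin 3 × ℕ) × (Fin 3 × ℕ)) :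
    birkhoffPair a₁ a₂ n (fun _ => p) = fPair a₁ a₂ (fun _ => p) * n := by
  simp [birkhoffPair, mul_comm]

lemma isGreatest_image_birkhoffPair {p : (Fin 3 × ℕ) × (Fin 3 × ℕ)} {c : ℝ}
    (hle : ∀ v ∈ OmegaPair a₁ a₂, ∀ i, fPair a₁ a₂ (fun j => v (j + i)) ≤ c)
    (hp : (fun _ => p) ∈ OmegaPair a₁ a₂) (hc : fPair a₁ a₂ (fun _ => p) = c) (n : ℕ) :
    IsGreatest (birkhoffPair a₁ a₂ n '' OmegaPair a₁ a₂) (c * n) := by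
  refine ⟨⟨_, hp, by rw [birkhoffPair_const, hc]⟩, ?_⟩
  rintro _ ⟨v, hv, rfl⟩
  simpa [birkhoffPair, mul_comm] using sum_le_card_nsmul (range n) _ c fun i _ => hle v hv i

lemma isLeast_image_birkhoffPair {p : (Fin 3 × ℕ) × (Fin 3 × ℕ)} {c : ℝ}
    (hle : ∀ v ∈ OmegaPair a₁ a₂, ∀ i, c ≤ fPair a₁ a₂ (fun j => v (j + i)))
    (hp : (fun _ => p) ∈ OmegaPair a₁ a₂) (hc : fPair a₁ a₂ (fun _ => p) = c) (n : ℕ) :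
    IsLeast (birkhoffPair a₁ a₂ n '' OmegaPair a₁ a₂) (c * n) := by
  refine ⟨⟨_, hp, by rw [birkhoffPair_const, hc]⟩, ?_⟩
  rintro _ ⟨v, hv, rfl⟩
  simpa [birkhoffPair, mul_comm] using card_nsmul_le_sum (range n) _ c fun i _ => hle v hv i

lemma const_typeTwo_typeOne_mem_OmegaPair (a₁ a₂ : ℕ) :
    (fun _ => ((1, 1), (0, 1))) ∈ OmegaPair a₁ a₂ := by
  intro n
  simp [validLetter, letterTrans]

lemma const_typeOne_typeTwo_mem_OmegaPair (a₁ a₂ : ℕ) :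
    (fun _ => ((0, 1), (1, 1))) ∈ OmegaPair a₁ a₂ := by
  intro n
  simp [validLetter, letterTrans]

lemma const_typeThree_typeThree_mem_OmegaPair (h₁ : 2 ≤ a₁) (h₂ : 2 ≤ a₂) :
    (fun _ => ((2, 1), (2, 1))) ∈ OmegaPair a₁ a₂ := by
  intro n
  simp [validLetter, letterTrans, h₁, h₂, one_le_two.trans h₁, one_le_two.trans h₂]

lemma fPair_const_typeTwo_typeOne (a₁ a₂ : ℕ) :
    fPair a₁ a₂ (fun _ => ((1, 1), (0, 1))) = -a₁ := by
  simp only [fPair, reduceIte, Fin.reduceEq]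
  ring

lemma fPair_const_typeOne_typeTwo (a₁ a₂ : ℕ) :
    fPair a₁ a₂ (fun _ => ((0, 1), (1, 1))) = -a₂ := by
  simp only [fPair, reduceIte, Fin.reduceEq]
  ring

lemma fPair_const_typeThree_typeThree (a₁ a₂ : ℕ) :
    fPair a₁ a₂ (fun _ => ((2, 1), (2, 1))) = -2 := by
  simp only [fPair, reduceIte, Fin.reduceEq]
  ring

lemma isGreatest_image_birkhoffPair_of_pos (h₁ : 1 ≤ a₁) (h₂ : 1 ≤ a₂) (n : ℕ) :
    IsGreatest (birkhoffPair a₁ a₂ n '' OmegaPair a₁ a₂)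
      ((if min a₁ a₂ = 1 then -1 else -2) * n) := by
  by_cases hmin : min a₁ a₂ = 1
  · rw [if_pos hmin]
    have h₁' : (1 : ℝ) ≤ a₁ := by exact_mod_cast h₁
    have h₂' : (1 : ℝ) ≤ a₂ := by exact_mod_cast h₂
    have hle : ∀ v ∈ OmegaPair a₁ a₂, ∀ i, fPair a₁ a₂ (fun j => v (j + i)) ≤ -1 := by
      intro v hv i
      rcases fPair_shift_eq_or hv i with h | h | h <;> rw [h] <;> linarith
    rcases min_choice a₁ a₂ with ha | ha <;> rw [ha] at hmin
    · refine isGreatest_image_birkhoffPair hle (const_typeTwo_typeOne_mem_OmegaPair a₁ a₂) ?_ n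
      rw [fPair_const_typeTwo_typeOne, hmin, Nat.cast_one]
    · refine isGreatest_image_birkhoffPair hle (const_typeOne_typeTwo_mem_OmegaPair a₁ a₂) ?_ n
      rw [fPair_const_typeOne_typeTwo, hmin, Nat.cast_one]
  · rw [if_neg hmin]
    have h₁' : (2 : ℝ) ≤ a₁ := by exact_mod_cast (by omega : 2 ≤ a₁)
    have h₂' : (2 : ℝ) ≤ a₂ := by exact_mod_cast (by omega : 2 ≤ a₂)
    have hle : ∀ v ∈ OmegaPair a₁ a₂, ∀ i, fPair a₁ a₂ (fun j => v (j + i)) ≤ -2 := by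
      intro v hv i
      rcases fPair_shift_eq_or hv i with h | h | h <;> rw [h] <;> linarith
    exact isGreatest_image_birkhoffPair hle
      (const_typeThree_typeThree_mem_OmegaPair (by omega) (by omega))
      (fPair_const_typeThree_typeThree a₁ a₂) n

lemma isLeast_image_birkhoffPair_of_two_le_max (h : 2 ≤ max a₁ a₂) (n : ℕ) :
    IsLeast (birkhoffPair a₁ a₂ n '' OmegaPair a₁ a₂) (-(max a₁ a₂ : ℝ) * n) := by
  have hle : ∀ v ∈ OmegaPair a₁ a₂, ∀ i, -(max a₁ a₂ : ℝ) ≤ fPair a₁ a₂ (fun j => v (j + i)) := by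
    intro v hv i
    have h' : (2 : ℝ) ≤ max (a₁ : ℝ) a₂ := by exact_mod_cast h
    rcases fPair_shift_eq_or hv i with hf | hf | hf <;> rw [hf]
    · linarith
    · exact neg_le_neg (le_max_left _ _)
    · exact neg_le_neg (le_max_right _ _)
  rcases max_choice (a₁ : ℝ) a₂ with ha | ha
  · exact isLeast_image_birkhoffPair hle (const_typeTwo_typeOne_mem_OmegaPair a₁ a₂)
      ((fPair_const_typeTwo_typeOne a₁ a₂).trans (by rw [ha])) n
  · exact isLeast_image_birkhoffPair hle (const_typeOne_typeTwo_mem_OmegaPair a₁ a₂)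
      ((fPair_const_typeOne_typeTwo a₁ a₂).trans (by rw [ha])) n

end Subshift

section OneOne

variable {v : ℕ → (Fin 3 × ℕ) × (Fin 3 × ℕ)}

lemma exists_type_two_of_letterTrans_one {x y z : Fin 3 × ℕ} (hxy : letterTrans 1 x.1 y)
    (hyz : letterTrans 1 y.1 z) : x.1 = 1 ∨ y.1 = 1 ∨ z.1 = 1 := by
  simp only [letterTrans, validLetter] at hxy hyz
  omega

lemma fPair_one_one_shift (v : ℕ → (Fin 3 × ℕ) × (Fin 3 × ℕ)) (i : ℕ) :
    fPair 1 1 (fun j => v (j + i)) =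
      -2 + (if ((v i).1).1 = 1 then 1 else 0) + (if ((v i).2).1 = 1 then 1 else 0) := by
  rw [fPair_shift]
  norm_num

lemma neg_four_le_sum_three_fPair_shift (hv : v ∈ OmegaPair 1 1) (i : ℕ) :
    -4 ≤ ∑ j ∈ range 3, fPair 1 1 (fun l => v (l + (i + j))) := by
  have hw₁ := one_le_ite_add_ite_add_ite <|
    exists_type_two_of_letterTrans_one (hv i).2.1 (hv i).2.2
  have hw₂ := one_le_ite_add_ite_add_ite <|
    exists_type_two_of_letterTrans_one (hv (i + 1)).2.2 (hv (i + 2)).2.1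
  simp only [sum_range_succ, sum_range_zero, fPair_one_one_shift, add_zero]
  linarith

lemma neg_four_thirds_mul_sub_le_birkhoffPair (hv : v ∈ OmegaPair 1 1) (n : ℕ) :
    -4 / 3 * n - 4 / 3 ≤ birkhoffPair 1 1 n v := by
  have hg : ∀ i, -4 / 3 - 2 / 3 ≤ fPair 1 1 (fun j => v (j + i)) := fun i => by
    rcases fPair_shift_eq_or hv i with h | h | h <;> rw [h] <;> norm_num
  have hblock : ∀ i, ((3 : ℕ) : ℝ) * (-4 / 3) ≤
      ∑ j ∈ range 3, fPair 1 1 (fun l => v (l + (i + j))) := fun i => by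
    linarith [neg_four_le_sum_three_fPair_shift hv i]
  have := le_sum_range_of_block_sum (by norm_num) (by norm_num) hg hblock n
  rw [birkhoffPair]
  linarith

/-- The pairs `(𝟐,𝟑) (𝟏,𝟐) (𝟑,𝟏)` repeated: exactly one letter of type `𝟐` in every three. -/
def periodThreePoint (i : ℕ) : (Fin 3 × ℕ) × (Fin 3 × ℕ) :=
  if i % 3 = 0 then ((1, 1), (2, 1)) else if i % 3 = 1 then ((0, 1), (1, 1)) else ((2, 1), (0, 1))

lemma periodThreePoint_mem_OmegaPair : periodThreePoint ∈ OmegaPair 1 1 := by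
  intro n
  simp only [periodThreePoint, validLetter, letterTrans]
  split_ifs <;> simp <;> omega

lemma fPair_shift_periodThreePoint (i : ℕ) :
    fPair 1 1 (fun j => periodThreePoint (j + i)) = if i % 3 = 2 then -2 else -1 := by
  have hi : i % 3 = 0 ∨ i % 3 = 1 ∨ i % 3 = 2 := by omega
  rw [fPair_one_one_shift]
  rcases hi with hi | hi | hi <;> norm_num [periodThreePoint, hi, Fin.ext_iff]

lemma birkhoffPair_periodThreePoint_le (n : ℕ) :
    birkhoffPair 1 1 n periodThreePoint ≤ -4 / 3 * n + 2 / 3 := by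
  have hg : ∀ i, 4 / 3 - 1 / 3 ≤ -fPair 1 1 (fun j => periodThreePoint (j + i)) := fun i => by
    rw [fPair_shift_periodThreePoint]
    split_ifs <;> norm_num
  have hblock : ∀ i, ((3 : ℕ) : ℝ) * (4 / 3) ≤
      ∑ j ∈ range 3, -fPair 1 1 (fun l => periodThreePoint (l + (i + j))) := fun i => by
    simp only [sum_range_succ, sum_range_zero, fPair_shift_periodThreePoint]
    split_ifs <;> first | omega | norm_num
  have := le_sum_range_of_block_sum (by norm_num) (by norm_num) hg hblock n
  rw [sum_neg_distrib] at this
  rw [birkhoffPair]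
  linarith

lemma abs_sInf_image_birkhoffPair_one_one_sub_le (n : ℕ) :
    |sInf (birkhoffPair 1 1 n '' OmegaPair 1 1) - -4 / 3 * n| ≤ 4 / 3 := by
  have hlow : ∀ x ∈ birkhoffPair 1 1 n '' OmegaPair 1 1, -4 / 3 * n - 4 / 3 ≤ x := by
    rintro _ ⟨v, hv, rfl⟩
    exact neg_four_thirds_mul_sub_le_birkhoffPair hv n
  have hmem : birkhoffPair 1 1 n periodThreePoint ∈ birkhoffPair 1 1 n '' OmegaPair 1 1 :=
    ⟨_, periodThreePoint_mem_OmegaPair, rfl⟩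
  have hge := le_csInf ⟨_, hmem⟩ hlow
  have hle := (csInf_le ⟨_, hlow⟩ hmem).trans (birkhoffPair_periodThreePoint_le n)
  rw [abs_le]
  constructor <;> linarith

end OneOne

/-- The extremal Birkhoff averages over the subshift `Ω_a`, `a = (a₁,a₂)`:
`F̲(a) = lim (1/n) inf_v S_n f(v)` equals `-4/3` when `max{a₁,a₂} = 1` and
`-max{a₁,a₂}` otherwise; `F̄(a) = lim (1/n) sup_v S_n f(v)` equals `-1` when
`min{a₁,a₂} = 1` and `-2` otherwise. -/
theorem extremal_birkhoff_averages_period_two (a₁ a₂ : ℕ) (h₁ : 1 ≤ a₁) (h₂ : 1 ≤ a₂) :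
    ∃ Flow Fupp : ℝ,
      Tendsto (fun n : ℕ => sInf (birkhoffPair a₁ a₂ n '' OmegaPair a₁ a₂) / n)
        atTop (nhds Flow) ∧
      Tendsto (fun n : ℕ => sSup (birkhoffPair a₁ a₂ n '' OmegaPair a₁ a₂) / n)
        atTop (nhds Fupp) ∧
      Flow = (if max a₁ a₂ = 1 then -4 / 3 else -(max a₁ a₂ : ℝ)) ∧
      Fupp = (if min a₁ a₂ = 1 then -1 else -2) := by
  refine ⟨_, _, ?_, ?_, rfl, rfl⟩
  · split_ifs with hmax
    · obtain ⟨rfl, rfl⟩ : a₁ = 1 ∧ a₂ = 1 := by omega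
      exact tendsto_div_of_abs_sub_mul_le abs_sInf_image_birkhoffPair_one_one_sub_le
    · refine tendsto_div_of_abs_sub_mul_le (d := 0) fun n => ?_
      rw [(isLeast_image_birkhoffPair_of_two_le_max (by omega) n).csInf_eq, sub_self, abs_zero]
  · refine tendsto_div_of_abs_sub_mul_le (d := 0) fun n => ?_
    rw [(isGreatest_image_birkhoffPair_of_pos h₁ h₂ n).csSup_eq, sub_self, abs_zero]
end
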